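/- The doubling map D sending a relation R : A → B → Prop to D(R) : A → A → B → B → Prop, defined by D(R) a a' b b' ↔ R a b ∧ R a' b', satisfies: (1) D(R) is completely positive for every R; (2) D preserves composition, i.e., for R : A → B → Prop and S : B → C → Prop, D(S ∘ R) = D(S) ∘ D(R), where (S ∘ R) a c ↔ ∃ b, R a b ∧ S b c and composition of CP relations is (Q ∘ P) a a' c c' ↔ ∃ b b', P a a' b b' ∧ Q b b' c c'; (3) D preserves identities, i.e., D(=) a a' b b' ↔ (a = b ∧ a' = b') equals the identity CP relation; and (4) D is injective. -/
import Mathlib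

/-- A relation `R : A → A → B → B → Prop` is completely positive. -/
def IsCP {A B : Type*} (R : A → A → B → B → Prop) : Prop :=
  (∀ a₁ a₂ b₁ b₂, R a₁ a₂ b₁ b₂ → R a₂ a₁ b₂ b₁) ∧
  (∀ a₁ a₂ b₁ b₂, R a₁ a₂ b₁ b₂ → R a₁ a₁ b₁ b₁)

/-- Composition of CP relations. -/
def cpComp {A B C : Type*} (P : A → A → B → B → Prop)
    (Q : B → B → C → C → Prop) : A → A → C → C → Prop :=
  fun a a' c c' => ∃ b b', P a a' b b' ∧ Q b b' c c'

/-- The doubling map `D`, action on morphisms of the embedding `Rel → CPM(Rel)`: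
`D(R) a a' b b' ↔ R a b ∧ R a' b'`. -/
def double {A B : Type*} (R : A → B → Prop) : A → A → B → B → Prop :=
  fun a a' b b' => R a b ∧ R a' b'

/-- The doubling map is CP-valued, preserves composition and identities, and is
injective (the embedding `Rel → CPM(Rel)` is a faithful functor). -/
theorem double_functor_faithful {A B C : Type*} :
    (∀ R : A → B → Prop, IsCP (double R)) ∧
    (∀ (R : A → B → Prop) (S : B → C → Prop),
      double (fun a c => ∃ b, R a b ∧ S b c) = cpComp (double R) (double S)) ∧
    (double (fun a b : A => a = b) =
      fun a a' b b' : A => a = b ∧ a' = b') ∧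
    (Function.Injective (double : (A → B → Prop) → (A → A → B → B → Prop))) := by
  refine ⟨fun R => ⟨fun _ _ _ _ h => ⟨h.2, h.1⟩, fun _ _ _ _ h => ⟨h.1, h.1⟩⟩, ?_, ?_, ?_⟩
  · intro R S
    funext a a' c c'
    simp only [double, cpComp, eq_iff_iff]
    constructor
    · rintro ⟨⟨b, hb, hs⟩, ⟨b', hb', hs'⟩⟩
      exact ⟨b, b', ⟨hb, hb'⟩, hs, hs'⟩
    · rintro ⟨b, b', ⟨hb, hb'⟩, hs, hs'⟩
      exact ⟨⟨b, hb, hs⟩, ⟨b', hb', hs'⟩⟩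
  · rfl
  · intro R S h
    funext a b
    have := congrFun (congrFun (congrFun (congrFun h a) a) b) b
    simp only [double, eq_iff_iff, and_self] at this
    exact propext (by rw [this])
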